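/- Let X be a locally finite graph with symmetric edge weights b, let V, f ∈ C(X) with f > 0, and u finitely supported. Then ∑_x V(x)|∇u|²(x) − ∑_x (T(V,f)(x)/f(x)) u(x)² = (1/2) ∑_{x,y} b(x,y) V(x) ( √(f(x)/f(y)) u(y) − √(f(y)/f(x)) u(x) )², where T(V,f)(x) = V(x)Δf(x) − ⟨∇f,∇V⟩_x. -/

import Mathlib

/-- Graph Laplacian `Δf(x) = ∑_{y} b(x,y)(f(x) − f(y))`. -/
noncomputable def graphLap {X : Type*} (b : X → X → ℝ) (f : X → ℝ) (x : X) : ℝ :=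
  ∑' y, b x y * (f x - f y)

/-- Pointwise squared gradient `|∇u|²(x) = (1/2)∑_y b(x,y)(u(x) − u(y))²`. -/
noncomputable def graphGradSq {X : Type*} (b : X → X → ℝ) (u : X → ℝ) (x : X) : ℝ :=
  (1 / 2) * ∑' y, b x y * (u x - u y) ^ 2

/-- `⟨∇f, ∇V⟩_x = (1/2)∑_y b(x,y)(f(x) − f(y))(V(x) − V(y))`. -/
noncomputable def graphGradInner {X : Type*} (b : X → X → ℝ) (f V : X → ℝ) (x : X) : ℝ :=
  (1 / 2) * ∑' y, b x y * (f x - f y) * (V x - V y)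

/-- `T(V,f)(x) = V(x)Δf(x) − ⟨∇f, ∇V⟩_x`. -/
noncomputable def graphT {X : Type*} (b : X → X → ℝ) (V f : X → ℝ) (x : X) : ℝ :=
  V x * graphLap b f x - graphGradInner b f V x

/-!
Pairing the `(x, y)` and `(y, x)` terms of the double sum on the right (using `b x y = b y x`)
turns it, pointwise, into the pair of terms `V x (u x - u y)² - b x y (f x - f y)(V x + V y) u x² / f x`
and its swap; summed over `y`, the second term gives `2 T(V,f)(x) u x² / f x`. Since `u` is finitely
supported and `b` locally finite, every double sum involved lives on a finite set of vertices, so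
the pairing is a finite rearrangement.
-/

theorem tsum_tsum_eq_sum_sum_of_ne_zero {X M : Type*} [AddCommMonoid M] [TopologicalSpace M]
    {g : X → X → M} (F : Finset X) (hg : ∀ x y, g x y ≠ 0 → x ∈ F ∧ y ∈ F) :
    ∑' x, ∑' y, g x y = ∑ x ∈ F, ∑ y ∈ F, g x y := by
  have inner : ∀ x, ∑' y, g x y = ∑ y ∈ F, g x y := fun x =>
    tsum_eq_sum fun y hy => by_contra fun h => hy (hg x y h).2
  rw [tsum_congr inner]
  exact tsum_eq_sum fun x hx => Finset.sum_eq_zero fun y _ => by_contra fun h => hx (hg x y h).1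

theorem Finset.sum_sum_eq_of_add_swap {X M : Type*} [AddCommGroup M] [IsAddTorsionFree M]
    (s : Finset X) {g h : X → X → M} (H : ∀ x y, g x y + g y x = h x y + h y x) :
    ∑ x ∈ s, ∑ y ∈ s, g x y = ∑ x ∈ s, ∑ y ∈ s, h x y := by
  have two_nsmul_eq (k : X → X → M) :
      2 • ∑ x ∈ s, ∑ y ∈ s, k x y = ∑ x ∈ s, ∑ y ∈ s, (k x y + k y x) := by
    simp only [Finset.sum_add_distrib, two_nsmul]
    rw [Finset.sum_comm (f := fun x y => k y x)]
  apply nsmul_right_injective two_ne_zero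
  simp only [two_nsmul_eq, H]

section Graph

variable {X : Type*} {b : X → X → ℝ}

theorem exists_finset_mem_of_ne_zero (hsym : ∀ x y, b x y = b y x)
    (hlf : ∀ x, {y | b x y ≠ 0}.Finite) {u : X → ℝ} (hu : (Function.support u).Finite) :
    ∃ F : Finset X, ∀ x y, b x y ≠ 0 → u x ≠ 0 ∨ u y ≠ 0 → x ∈ F ∧ y ∈ F := by
  classical
  refine ⟨hu.toFinset.biUnion fun x => insert x (hlf x).toFinset, ?_⟩
  simp only [Finset.mem_biUnion, Finset.mem_insert, Set.Finite.mem_toFinset,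
    Function.mem_support, Set.mem_ofPred_eq]
  rintro x y hb (hx | hy)
  · exact ⟨⟨x, hx, .inl rfl⟩, ⟨x, hx, .inr hb⟩⟩
  · exact ⟨⟨y, hy, .inr (hsym y x ▸ hb)⟩, ⟨y, hy, .inl rfl⟩⟩

theorem graphT_eq_half_tsum {x : X} (hx : {y | b x y ≠ 0}.Finite) (V f : X → ℝ) :
    graphT b V f x = 1 / 2 * ∑' y, b x y * (f x - f y) * (V x + V y) := by
  have summable {k : X → ℝ} (hk : ∀ y, b x y = 0 → k y = 0) : Summable k :=
    summable_of_hasFiniteSupport <| hx.subset fun y hy => mt (hk y) hy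
  rw [graphT, graphLap, graphGradInner, ← tsum_mul_left, ← tsum_mul_left, ← tsum_mul_left,
    ← Summable.tsum_sub (summable fun y h => by simp [h]) (summable fun y h => by simp [h])]
  exact tsum_congr fun y => by ring

theorem ground_state_summand_add_swap (hsym : ∀ x y, b x y = b y x) {V f u : X → ℝ}
    (hf : ∀ x, 0 < f x) (x y : X) :
    b x y * V x * (√(f x / f y) * u y - √(f y / f x) * u x) ^ 2 +
        b y x * V y * (√(f y / f x) * u x - √(f x / f y) * u y) ^ 2 =
      (b x y * V x * (u x - u y) ^ 2 - b x y * (f x - f y) * (V x + V y) * u x ^ 2 / f x) +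
        (b y x * V y * (u y - u x) ^ 2 - b y x * (f y - f x) * (V y + V x) * u y ^ 2 / f y) := by
  have hx := (hf x).ne'
  have hy := (hf y).ne'
  have sq_xy : √(f x / f y) ^ 2 = f x / f y := Real.sq_sqrt (div_pos (hf x) (hf y)).le
  have sq_yx : √(f y / f x) ^ 2 = f y / f x := Real.sq_sqrt (div_pos (hf y) (hf x)).le
  have prod : √(f x / f y) * √(f y / f x) = 1 := by
    rw [← Real.sqrt_mul (div_pos (hf x) (hf y)).le, show f x / f y * (f y / f x) = 1 by field_simp,
      Real.sqrt_one]
  rw [hsym y x]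
  linear_combination (norm := (field_simp; ring)) (b x y * (V x + V y) * u y ^ 2) * sq_xy +
    (b x y * (V x + V y) * u x ^ 2) * sq_yx - (2 * b x y * (V x + V y) * u x * u y) * prod

end Graph

theorem graph_weighted_hardy_equality {X : Type*} (b : X → X → ℝ)
    (hsym : ∀ x y, b x y = b y x) (hlf : ∀ x, {y | b x y ≠ 0}.Finite)
    (V f u : X → ℝ) (hf : ∀ x, 0 < f x) (hu : (Function.support u).Finite) :
    ∑' x, V x * graphGradSq b u x - ∑' x, (graphT b V f x / f x) * (u x) ^ 2 =
      (1 / 2) * ∑' x, ∑' y, b x y * V x *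
        (Real.sqrt (f x / f y) * u y - Real.sqrt (f y / f x) * u x) ^ 2 := by
  obtain ⟨F, hF⟩ := exists_finset_mem_of_ne_zero hsym hlf hu
  have reduce {g : X → X → ℝ} (hg : ∀ x y, b x y = 0 ∨ (u x = 0 ∧ u y = 0) → g x y = 0) :
      ∑' x, ∑' y, g x y = ∑ x ∈ F, ∑ y ∈ F, g x y :=
    tsum_tsum_eq_sum_sum_of_ne_zero F fun x y h =>
      hF x y (fun hb => h (hg x y (.inl hb))) (not_and_or.mp fun h0 => h (hg x y (.inr h0)))
  have grad : ∑' x, V x * graphGradSq b u x =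
      1 / 2 * ∑' x, ∑' y, b x y * V x * (u x - u y) ^ 2 := by
    rw [← tsum_mul_left]
    refine tsum_congr fun x => ?_
    rw [graphGradSq, ← tsum_mul_left, ← tsum_mul_left, ← tsum_mul_left]
    exact tsum_congr fun y => by ring
  have potential : ∑' x, graphT b V f x / f x * u x ^ 2 =
      1 / 2 * ∑' x, ∑' y, b x y * (f x - f y) * (V x + V y) * u x ^ 2 / f x := by
    rw [← tsum_mul_left]
    refine tsum_congr fun x => ?_
    rw [graphT_eq_half_tsum (hlf x), ← tsum_mul_left, ← tsum_div_const, ← tsum_mul_right,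
      ← tsum_mul_left]
    exact tsum_congr fun y => by ring
  rw [grad, potential, ← mul_sub, reduce, reduce, reduce]
  · simp only [← Finset.sum_sub_distrib]
    exact congrArg _ (Finset.sum_sum_eq_of_add_swap F fun x y =>
      (ground_state_summand_add_swap hsym hf x y).symm)
  all_goals rintro x y (hb | ⟨hx, hy⟩) <;> [simp [hb]; simp [hx, hy]]
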